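/- Let 0 < L ≤ 1 and let Q ⊆ [0,1]² be the union of the four closed corner squares of side length L/4, namely [0,L/4]², [1−L/4,1]×[0,L/4], [0,L/4]×[1−L/4,1], and [1−L/4,1]². Then Q has area L²/4, and every closed Euclidean disk of radius r ≥ L that is contained in [0,1]² is disjoint from Q. -/

import Mathlib

open Metric Set MeasureTheory

noncomputable section

/-- The plane ℝ² with the Euclidean metric. -/
abbrev Plane := EuclideanSpace ℝ (Fin 2)

/-- The unit square `[0,1] × [0,1]` in the plane. -/
def unitSquare : Set Plane := {x | x 0 ∈ Icc (0:ℝ) 1 ∧ x 1 ∈ Icc (0:ℝ) 1}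

/-- The axis-parallel box `[a,b] × [a',b']` in the plane. -/
def box (a b a' b' : ℝ) : Set Plane := {x | x 0 ∈ Icc a b ∧ x 1 ∈ Icc a' b'}

/-- The union of the four closed corner squares of side `L/4` of the unit square. -/
def cornerRegion (L : ℝ) : Set Plane :=
  box 0 (L/4) 0 (L/4) ∪ box (1 - L/4) 1 0 (L/4) ∪
  box 0 (L/4) (1 - L/4) 1 ∪ box (1 - L/4) 1 (1 - L/4) 1

lemma box_eq_preimage (a b a' b' : ℝ) :
    box a b a' b' = (MeasurableEquiv.toLp 2 (Fin 2 → ℝ)).symm ⁻¹'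
      (Set.univ.pi fun i : Fin 2 => if i = 0 then Icc a b else Icc a' b') := by
  ext x
  constructor
  · rintro ⟨h1, h2⟩ i _
    fin_cases i <;> simpa
  · intro hx
    exact ⟨by simpa using hx 0 trivial, by simpa using hx 1 trivial⟩

lemma box_measurable (a b a' b' : ℝ) : MeasurableSet (box a b a' b') := by
  rw [box_eq_preimage]
  exact (MeasurableEquiv.toLp 2 (Fin 2 → ℝ)).symm.measurable
    (MeasurableSet.univ_pi fun i => by split <;> exact measurableSet_Icc)

lemma vol_box (a b a' b' : ℝ) :
    volume (box a b a' b') = ENNReal.ofReal (b - a) * ENNReal.ofReal (b' - a') := by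
  rw [box_eq_preimage, (EuclideanSpace.volume_preserving_symm_measurableEquiv_toLp (Fin 2)).measure_preimage
      (MeasurableSet.univ_pi fun i => by split <;> exact measurableSet_Icc).nullMeasurableSet]
  rw [volume_pi_pi]
  simp [Fin.prod_univ_two, Real.volume_Icc]

lemma unitSquare_coord {p : Plane} (hp : p ∈ unitSquare) (j : Fin 2) :
    p j ∈ Icc (0:ℝ) 1 := by
  fin_cases j
  · exact hp.1
  · exact hp.2

lemma coord_bounds (c : Plane) (r : ℝ) (hr : 0 ≤ r)
    (hsub : closedBall c r ⊆ unitSquare) (i : Fin 2) : r ≤ c i ∧ c i ≤ 1 - r := by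
  have hmem : ∀ s : ℝ, |s| ≤ r → c i + s ∈ Icc (0:ℝ) 1 := by
    intro s hs
    have hb : c + s • EuclideanSpace.single i (1:ℝ) ∈ unitSquare := by
      apply hsub
      rw [mem_closedBall, dist_comm, dist_self_add_right, norm_smul,
        EuclideanSpace.norm_single]
      simpa using hs
    have := unitSquare_coord hb i
    simpa [EuclideanSpace.single_apply] using this
  have h1 := hmem r (le_of_eq (abs_of_nonneg hr))
  have h2 := hmem (-r) (by rw [abs_neg]; exact le_of_eq (abs_of_nonneg hr))
  exact ⟨by linarith [h2.1], by linarith [h1.2]⟩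

/-- Corner region untouched by large disks (Lemma 3.7): for `0 < L ≤ 1`, the union `Q`
of the four corner squares of side `L/4` of the unit square has area `L²/4`, and every
closed disk of radius `r ≥ L` contained in the unit square is disjoint from `Q`. -/
theorem corner_region_area_and_untouched_by_large_disks
    (L : ℝ) (hL0 : 0 < L) (hL1 : L ≤ 1) :
    volume (cornerRegion L) = ENNReal.ofReal (L ^ 2 / 4) ∧
    ∀ (c : Plane) (r : ℝ), L ≤ r → closedBall c r ⊆ unitSquare →
      Disjoint (closedBall c r) (cornerRegion L) := by
  have hlt : L / 4 < 1 - L / 4 := by linarith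
  constructor
  · -- volume computation
    have hd12 : Disjoint (box 0 (L/4) 0 (L/4)) (box (1 - L/4) 1 0 (L/4)) := by
      rw [Set.disjoint_left]; rintro x ⟨⟨_, h1⟩, _⟩ ⟨⟨h2, _⟩, _⟩; linarith
    have hd3 : Disjoint (box 0 (L/4) 0 (L/4) ∪ box (1 - L/4) 1 0 (L/4))
        (box 0 (L/4) (1 - L/4) 1) := by
      rw [Set.disjoint_left]
      rintro x (⟨⟨g0, g1⟩, g2, g3⟩ | ⟨⟨g0, g1⟩, g2, g3⟩) ⟨⟨k0, k1⟩, k2, k3⟩ <;> linarith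
    have hd4 : Disjoint (box 0 (L/4) 0 (L/4) ∪ box (1 - L/4) 1 0 (L/4) ∪
        box 0 (L/4) (1 - L/4) 1) (box (1 - L/4) 1 (1 - L/4) 1) := by
      rw [Set.disjoint_left]
      rintro x ((⟨⟨g0, g1⟩, g2, g3⟩ | ⟨⟨g0, g1⟩, g2, g3⟩) | ⟨⟨g0, g1⟩, g2, g3⟩)
        ⟨⟨k0, k1⟩, k2, k3⟩ <;> linarith
    unfold cornerRegion
    rw [measure_union hd4 (box_measurable _ _ _ _),
      measure_union hd3 (box_measurable _ _ _ _),
      measure_union hd12 (box_measurable _ _ _ _)]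
    rw [vol_box, vol_box, vol_box, vol_box]
    have h4 : (0:ℝ) ≤ L / 4 := by linarith
    have e : ∀ a b : ℝ, a = L/4 → b = L/4 →
        ENNReal.ofReal a * ENNReal.ofReal b = ENNReal.ofReal (L^2/16) := by
      rintro a b rfl rfl
      rw [← ENNReal.ofReal_mul h4]; congr 1; ring
    rw [e _ _ (by ring) (by ring), e _ _ (by ring) (by ring),
      e _ _ (by ring) (by ring), e _ _ (by ring) (by ring)]
    have h16 : (0:ℝ) ≤ L^2/16 := by positivity
    rw [← ENNReal.ofReal_add h16 h16, ← ENNReal.ofReal_add (by linarith) h16,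
      ← ENNReal.ofReal_add (by linarith) h16]
    congr 1; ring
  · -- disjointness
    intro c r hLr hsub
    have hr0 : 0 ≤ r := le_trans hL0.le hLr
    obtain ⟨hc0l, hc0r⟩ := coord_bounds c r hr0 hsub 0
    obtain ⟨hc1l, hc1r⟩ := coord_bounds c r hr0 hsub 1
    rw [Set.disjoint_left]
    intro x hx hxQ
    have hdist : dist x c ≤ r := mem_closedBall.mp hx
    have hsq : (x 0 - c 0)^2 + (x 1 - c 1)^2 ≤ r^2 := by
      have h1 : dist x c ^ 2 ≤ r ^ 2 := by
        apply pow_le_pow_left₀ dist_nonneg hdist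
      have h2 : dist x c ^ 2 = (x 0 - c 0)^2 + (x 1 - c 1)^2 := by
        rw [EuclideanSpace.dist_eq, Real.sq_sqrt (by positivity)]
        simp [Fin.sum_univ_two, Real.dist_eq, sq_abs]
      linarith [h2 ▸ h1]
    rcases hxQ with ((⟨⟨h00, h01⟩, h10, h11⟩ | ⟨⟨h00, h01⟩, h10, h11⟩) |
        ⟨⟨h00, h01⟩, h10, h11⟩) | ⟨⟨h00, h01⟩, h10, h11⟩ <;>
      nlinarith [sq_nonneg (x 0 - c 0), sq_nonneg (x 1 - c 1), sq_nonneg (r - L/4),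
        mul_pos hL0 hL0]
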